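/- arXiv:2009.05842 — 3 statements merged into one kernel-verified Lean document; each statement's English description precedes it below -/
import Mathlib

section
/- Every C¹-smooth function F : ℝ³ → ℝ satisfying ∂F/∂uᵢ(u) = aᵢ(e^{u₁}, e^{u₂}, e^{u₃}) for all u ∈ ℝ³ and i = 1,2,3 satisfies the translation identity F(u + (k,k,k)) = F(u) + kπ for all u ∈ ℝ³ and all k ∈ ℝ. -/
noncomputable section

open Real Set Filter

/-- The generalized Euclidean triangle angle `aᵢ(x)` opposite the side of length `x i`,
for a generalized triangle with (positive) side lengths `x 0, x 1, x 2`: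
it is `π` if `x i ≥ x j + x k`, `0` if some other side is at least the sum of the
remaining two, and otherwise the usual Euclidean angle `arccos((xⱼ²+x_k²−xᵢ²)/(2xⱼx_k))`. -/
noncomputable def genAngle (x : Fin 3 → ℝ) (i : Fin 3) : ℝ :=
  if x (i + 1) + x (i + 2) ≤ x i then Real.pi
  else if x i + x (i + 2) ≤ x (i + 1) ∨ x i + x (i + 1) ≤ x (i + 2) then 0
  else Real.arccos
    ((x (i + 1) ^ 2 + x (i + 2) ^ 2 - x i ^ 2) / (2 * x (i + 1) * x (i + 2)))

/-!
The angles of a generalized triangle always sum to `π`: in the degenerate case they are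
`π, 0, 0`, and otherwise a triangle with the given side lengths exists in the plane, so the
inverse law of cosines identifies them with its inner angles. Hence the directional derivative
of `F` along `(1, 1, 1)` is `π` everywhere, and `F` is affine with slope `π` on every line
in that direction.
-/

theorem EuclideanGeometry.angle_eq_arccos_of_ne {V P : Type*} [NormedAddCommGroup V]
    [InnerProductSpace ℝ V] [MetricSpace P] [NormedAddTorsor V P] {p₁ p₂ p₃ : P}
    (h₁ : p₁ ≠ p₂) (h₃ : p₃ ≠ p₂) :
    EuclideanGeometry.angle p₁ p₂ p₃ = Real.arccos
      ((dist p₁ p₂ ^ 2 + dist p₃ p₂ ^ 2 - dist p₁ p₃ ^ 2) / (2 * dist p₁ p₂ * dist p₃ p₂)) := by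
  have h₁₂ : 0 < dist p₁ p₂ := dist_pos.2 h₁
  have h₃₂ : 0 < dist p₃ p₂ := dist_pos.2 h₃
  have hcos : (dist p₁ p₂ ^ 2 + dist p₃ p₂ ^ 2 - dist p₁ p₃ ^ 2) /
      (2 * dist p₁ p₂ * dist p₃ p₂) = Real.cos (EuclideanGeometry.angle p₁ p₂ p₃) := by
    field_simp
    linear_combination -EuclideanGeometry.law_cos p₁ p₂ p₃
  rw [hcos, Real.arccos_cos (EuclideanGeometry.angle_nonneg _ _ _)
    (EuclideanGeometry.angle_le_pi _ _ _)]

-- The third vertex lies above the point `p` of the base `[0, c]` given by the law of cosines;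
-- its height is real because `(2c)² (b² - p²)` is Heron's product.
theorem Complex.exists_dist_eq_of_lt_add {a b c : ℝ} (ha : a < b + c) (hb : b < c + a)
    (hc : c < a + b) :
    ∃ p₁ p₂ p₃ : ℂ, dist p₂ p₃ = a ∧ dist p₃ p₁ = b ∧ dist p₁ p₂ = c := by
  have ha₀ : 0 < a := by linarith
  have hb₀ : 0 < b := by linarith
  have hc₀ : 0 < c := by linarith
  set p := (b ^ 2 + c ^ 2 - a ^ 2) / (2 * c)
  have hp : p * (2 * c) = b ^ 2 + c ^ 2 - a ^ 2 := div_mul_cancel₀ _ (by positivity)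
  have heron : (2 * c) ^ 2 * (b ^ 2 - p ^ 2) =
      (a + b + c) * (b + c - a) * (c + a - b) * (a + b - c) := by
    linear_combination (-(p * (2 * c)) - (b ^ 2 + c ^ 2 - a ^ 2)) * hp
  have hq : 0 ≤ b ^ 2 - p ^ 2 := by
    nlinarith [mul_pos (mul_pos (mul_pos (by linarith : 0 < a + b + c) (sub_pos.2 ha))
      (sub_pos.2 hb)) (sub_pos.2 hc)]
  set q := √(b ^ 2 - p ^ 2)
  have hq₂ : q ^ 2 = b ^ 2 - p ^ 2 := Real.sq_sqrt hq
  refine ⟨0, c, p + q * Complex.I, ?_, ?_, ?_⟩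
  · rw [dist_comm, Complex.dist_eq, show (p : ℂ) + q * Complex.I - c = ↑(p - c) + q * Complex.I by
      push_cast; ring, Complex.norm_add_mul_I, Real.sqrt_eq_iff_eq_sq (by positivity) ha₀.le]
    linear_combination hq₂ - hp
  · rw [Complex.dist_eq, sub_zero, Complex.norm_add_mul_I, hq₂, add_sub_cancel,
      Real.sqrt_sq hb₀.le]
  · simp [hc₀.le]

theorem Real.arccos_add_arccos_add_arccos_eq_pi {a b c : ℝ} (ha : a < b + c) (hb : b < c + a)
    (hc : c < a + b) :
    arccos ((b ^ 2 + c ^ 2 - a ^ 2) / (2 * b * c)) +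
      arccos ((c ^ 2 + a ^ 2 - b ^ 2) / (2 * c * a)) +
      arccos ((a ^ 2 + b ^ 2 - c ^ 2) / (2 * a * b)) = π := by
  obtain ⟨p₁, p₂, p₃, h₂₃, h₃₁, h₁₂⟩ := Complex.exists_dist_eq_of_lt_add ha hb hc
  have h₁₂' : p₁ ≠ p₂ := dist_pos.1 (by rw [h₁₂]; linarith)
  have h₂₃' : p₂ ≠ p₃ := dist_pos.1 (by rw [h₂₃]; linarith)
  have h₃₁' : p₃ ≠ p₁ := dist_pos.1 (by rw [h₃₁]; linarith)
  have hsum := EuclideanGeometry.angle_add_angle_add_angle_eq_pi p₂ h₃₁'.symm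
  rw [EuclideanGeometry.angle_eq_arccos_of_ne h₃₁' h₁₂'.symm,
    EuclideanGeometry.angle_eq_arccos_of_ne h₁₂' h₂₃'.symm,
    EuclideanGeometry.angle_eq_arccos_of_ne h₂₃' h₃₁'.symm,
    dist_comm p₂ p₁, dist_comm p₃ p₂, dist_comm p₁ p₃, h₁₂, h₂₃, h₃₁] at hsum
  exact hsum

lemma Fin.three_add_one_add_one (i : Fin 3) : i + 1 + 1 = i + 2 := by fin_cases i <;> rfl
lemma Fin.three_add_one_add_two (i : Fin 3) : i + 1 + 2 = i := by fin_cases i <;> rfl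
lemma Fin.three_add_two_add_one (i : Fin 3) : i + 2 + 1 = i := by fin_cases i <;> rfl
lemma Fin.three_add_two_add_two (i : Fin 3) : i + 2 + 2 = i + 1 := by fin_cases i <;> rfl

lemma Fin.sum_univ_three_rotate {M : Type*} [AddCommMonoid M] (f : Fin 3 → M) (i : Fin 3) :
    ∑ j, f j = f i + f (i + 1) + f (i + 2) := by
  rw [← Fintype.sum_equiv (Equiv.addLeft i) _ _ fun _ => rfl, Fin.sum_univ_three]
  simp

namespace genAngle

variable {x : Fin 3 → ℝ}

lemma sum_rotate_eq_pi_of_add_le (hx : ∀ i, 0 < x i) {i : Fin 3}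
    (h : x (i + 1) + x (i + 2) ≤ x i) :
    genAngle x i + genAngle x (i + 1) + genAngle x (i + 2) = π := by
  have := hx (i + 1); have := hx (i + 2)
  simp only [genAngle, Fin.three_add_one_add_one, Fin.three_add_one_add_two,
    Fin.three_add_two_add_one, Fin.three_add_two_add_two]
  rw [if_pos h, if_neg (by linarith), if_pos (Or.inr h), if_neg (by linarith),
    if_pos (Or.inl (by linarith))]
  ring

lemma eq_arccos_of_lt_add (h : ∀ j, x j < x (j + 1) + x (j + 2)) (i : Fin 3) :
    genAngle x i =
      arccos ((x (i + 1) ^ 2 + x (i + 2) ^ 2 - x i ^ 2) / (2 * x (i + 1) * x (i + 2))) := by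
  have h₁ := h (i + 1); have h₂ := h (i + 2)
  simp only [Fin.three_add_one_add_one, Fin.three_add_one_add_two,
    Fin.three_add_two_add_one, Fin.three_add_two_add_two] at h₁ h₂
  rw [genAngle, if_neg (not_le.2 (h i)), if_neg (by push Not; constructor <;> linarith)]

theorem sum_eq_pi (hx : ∀ i, 0 < x i) : ∑ i, genAngle x i = π := by
  by_cases hdeg : ∃ i, x (i + 1) + x (i + 2) ≤ x i
  · obtain ⟨i, hi⟩ := hdeg
    rw [Fin.sum_univ_three_rotate _ i, sum_rotate_eq_pi_of_add_le hx hi]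
  · push Not at hdeg
    rw [Fin.sum_univ_three, eq_arccos_of_lt_add hdeg, eq_arccos_of_lt_add hdeg,
      eq_arccos_of_lt_add hdeg]
    exact Real.arccos_add_arccos_add_arccos_eq_pi (hdeg 0) (hdeg 1) (hdeg 2)

end genAngle

theorem Differentiable.apply_add_smul_of_fderiv_apply_eq {E : Type*} [NormedAddCommGroup E]
    [NormedSpace ℝ E] {F : E → ℝ} (hF : Differentiable ℝ F) {w : E} {c : ℝ}
    (h : ∀ v, fderiv ℝ F v w = c) (u : E) (t : ℝ) : F (u + t • w) = F u + t * c := by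
  have hline : ∀ s : ℝ, HasDerivAt (fun s => F (u + s • w) - s * c) 0 s := by
    intro s
    have hw : HasDerivAt (fun s : ℝ => u + s • w) w s := by
      simpa using ((hasDerivAt_id s).smul_const w).const_add u
    have := ((hF _).hasFDerivAt.comp_hasDerivAt s hw).sub ((hasDerivAt_id s).mul_const c)
    rw [h, one_mul, sub_self] at this
    exact this
  have := is_const_of_deriv_eq_zero (fun s => (hline s).differentiableAt)
    (fun s => (hline s).deriv) t 0
  simp only [zero_smul, add_zero, zero_mul, sub_zero] at this
  linarith

/-- any `C¹` function `F : ℝ³ → ℝ` with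
`∂F/∂uᵢ(u) = aᵢ(e^{u₁}, e^{u₂}, e^{u₃})` satisfies `F(u + (k,k,k)) = F(u) + kπ`. -/
theorem translation_identity_of_potential (F : (Fin 3 → ℝ) → ℝ)
    (hF : ContDiff ℝ 1 F)
    (hgrad : ∀ (u : Fin 3 → ℝ) (i : Fin 3),
      fderiv ℝ F u (Pi.single i 1) = genAngle (fun j => Real.exp (u j)) i) :
    ∀ (u : Fin 3 → ℝ) (k : ℝ), F (fun j => u j + k) = F u + k * Real.pi := by
  have hdiag : ∀ v, fderiv ℝ F v (fun _ => 1) = π := fun v => by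
    rw [← Finset.univ_sum_single (fun _ => (1 : ℝ)), map_sum]
    simp only [hgrad]
    exact genAngle.sum_eq_pi fun j => exp_pos (v j)
  intro u k
  convert (hF.differentiable one_ne_zero).apply_add_smul_of_fderiv_apply_eq hdiag u k using 2
  ext j
  simp
end
end

section
/- Let F : ℝ³ → ℝ be any C¹-smooth convex function with ∂F/∂uᵢ(u) = aᵢ(e^{u₁}, e^{u₂}, e^{u₃}) for all u ∈ ℝ³, and let A = {u ∈ ℝ³ : u₁+u₂+u₃ = 0 and e^{uᵢ} + e^{uⱼ} > e^{u_k} for all permutations {i,j,k} = {1,2,3}}. Then F is strictly convex on A: for all u ≠ v in A such that the segment [u,v] is contained in A, F((u+v)/2) < (F(u)+F(v))/2. -/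
noncomputable section

open Real Set Filter

/-- The set `A = {u ∈ ℝ³ : u₁+u₂+u₃ = 0, e^{uᵢ} + e^{uⱼ} > e^{u_k} for all permutations}`. -/
def domA : Set (Fin 3 → ℝ) :=
  {u | (u 0 + u 1 + u 2 = 0) ∧
    ∀ i : Fin 3, Real.exp (u i) < Real.exp (u (i + 1)) + Real.exp (u (i + 2))}

/-!
If equality held at the midpoint `m` of `u ≠ v`, the tangent plane of the convex function
`F` at `m` would touch its graph at `u` and at `v`, forcing `∇F u = ∇F m = ∇F v`. But `∇F u`
is the angle vector of the triangle with sides `e^{uᵢ}`, and by the law of sines a triangle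
whose sides have product `e^{u₁+u₂+u₃} = 1` is determined by its angles.
-/

section Convex

variable {E : Type*} [NormedAddCommGroup E] [NormedSpace ℝ E] {F : E → ℝ}

theorem ConvexOn.add_fderiv_le (hconv : ConvexOn ℝ univ F) {x : E}
    (hF : DifferentiableAt ℝ F x) (y : E) : F x + fderiv ℝ F x (y - x) ≤ F y := by
  have hline : ConvexOn ℝ univ (F ∘ AffineMap.lineMap (k := ℝ) x y) := by
    simpa using hconv.comp_affineMap (AffineMap.lineMap (k := ℝ) x y)
  have hderiv : HasDerivAt (F ∘ AffineMap.lineMap (k := ℝ) x y) (fderiv ℝ F x (y - x)) 0 :=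
    hF.hasFDerivAt.comp_hasDerivAt_of_eq 0 AffineMap.hasDerivAt_lineMap
      (AffineMap.lineMap_apply_zero x y).symm
  have := hline.le_slope_of_hasDerivAt (mem_univ 0) (mem_univ 1) one_pos hderiv
  rwa [slope_def_field, Function.comp_apply, Function.comp_apply, AffineMap.lineMap_apply_one,
    AffineMap.lineMap_apply_zero, sub_zero, div_one, le_sub_iff_add_le'] at this

/-- Equality in the supporting-hyperplane inequality at `x` makes `y` a minimum of
`F - fderiv ℝ F x`, so the two derivatives agree. -/
theorem ConvexOn.fderiv_eq_of_add_fderiv_eq (hconv : ConvexOn ℝ univ F)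
    (hF : Differentiable ℝ F) {x y : E} (h : F x + fderiv ℝ F x (y - x) = F y) :
    fderiv ℝ F y = fderiv ℝ F x := by
  set D := fderiv ℝ F x
  have hmin : IsLocalMin (fun z => F z - D z) y := Eventually.of_forall fun z => by
    have := hconv.add_fderiv_le (hF x) z
    simp only [map_sub] at h this
    linarith
  have := hmin.fderiv_eq_zero
  rw [fderiv_fun_sub (hF y) D.differentiableAt, D.fderiv] at this
  exact sub_eq_zero.mp this

theorem ConvexOn.fderiv_eq_of_le_midpoint (hconv : ConvexOn ℝ univ F)
    (hF : Differentiable ℝ F) {u v : E} (h : (F u + F v) / 2 ≤ F (midpoint ℝ u v)) :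
    fderiv ℝ F u = fderiv ℝ F v := by
  set m := midpoint ℝ u v
  have hcancel : fderiv ℝ F m (u - m) + fderiv ℝ F m (v - m) = 0 := by
    rw [← map_add, left_sub_midpoint, right_sub_midpoint, ← smul_add, add_comm,
      sub_add_sub_cancel, sub_self, smul_zero, map_zero]
  have hu := hconv.add_fderiv_le (hF m) u
  have hv := hconv.add_fderiv_le (hF m) v
  rw [hconv.fderiv_eq_of_add_fderiv_eq hF (x := m) (by linarith),
    hconv.fderiv_eq_of_add_fderiv_eq hF (x := m) (y := v) (by linarith)]

end Convex

def IsTriangle (x : Fin 3 → ℝ) : Prop :=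
  (∀ i, 0 < x i) ∧ ∀ i, x i < x (i + 1) + x (i + 2)

/-- Sixteen times the squared area of the triangle with sides `x` (Heron's formula). -/
def heronProd (x : Fin 3 → ℝ) : ℝ :=
  (x 0 + x 1 + x 2) * (x 1 + x 2 - x 0) * (x 0 + x 2 - x 1) * (x 0 + x 1 - x 2)

lemma heronProd_eq_sq_sub_sq (x : Fin 3 → ℝ) (i : Fin 3) :
    heronProd x =
      (2 * x (i + 1) * x (i + 2)) ^ 2 - (x (i + 1) ^ 2 + x (i + 2) ^ 2 - x i ^ 2) ^ 2 := by
  fin_cases i <;>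
    simp only [heronProd, Fin.zero_eta, Fin.mk_one, Fin.reduceFinMk, Fin.isValue, Fin.reduceAdd,
      zero_add] <;> ring

lemma mul_mul_rotate_fin3 (x : Fin 3 → ℝ) (i : Fin 3) :
    x i * x (i + 1) * x (i + 2) = x 0 * x 1 * x 2 := by
  fin_cases i <;>
    simp only [Fin.zero_eta, Fin.mk_one, Fin.reduceFinMk, Fin.isValue, Fin.reduceAdd,
      zero_add] <;> ring

namespace IsTriangle

variable {x : Fin 3 → ℝ}

lemma lt_add (hx : IsTriangle x) : x 0 < x 1 + x 2 ∧ x 1 < x 2 + x 0 ∧ x 2 < x 0 + x 1 :=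
  ⟨hx.2 0, hx.2 1, hx.2 2⟩

lemma heronProd_pos (hx : IsTriangle x) : 0 < heronProd x := by
  obtain ⟨h0, h1, h2⟩ := hx.lt_add
  unfold heronProd
  apply mul_pos (mul_pos (mul_pos _ _) _) _ <;> linarith

lemma genAngle_eq_arccos (hx : IsTriangle x) (i : Fin 3) :
    genAngle x i =
      arccos ((x (i + 1) ^ 2 + x (i + 2) ^ 2 - x i ^ 2) / (2 * x (i + 1) * x (i + 2))) := by
  have hrot : x (i + 1) < x i + x (i + 2) ∧ x (i + 2) < x i + x (i + 1) := by
    obtain ⟨h0, h1, h2⟩ := hx.lt_add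
    fin_cases i <;>
      simp only [Fin.zero_eta, Fin.mk_one, Fin.reduceFinMk, Fin.isValue, Fin.reduceAdd,
        zero_add] <;> constructor <;> linarith
  rw [genAngle, if_neg (not_le.mpr (hx.2 i)), if_neg]
  rintro (h | h) <;> linarith

/-- The law of sines. -/
lemma sin_genAngle (hx : IsTriangle x) (i : Fin 3) :
    sin (genAngle x i) = √(heronProd x) / (2 * (x 0 * x 1 * x 2)) * x i := by
  have hi := hx.1 i; have hi1 := hx.1 (i + 1); have hi2 := hx.1 (i + 2)
  have hcos : 1 - ((x (i + 1) ^ 2 + x (i + 2) ^ 2 - x i ^ 2) / (2 * x (i + 1) * x (i + 2))) ^ 2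
      = heronProd x / (2 * x (i + 1) * x (i + 2)) ^ 2 := by
    rw [heronProd_eq_sq_sub_sq x i]
    field_simp
  rw [hx.genAngle_eq_arccos, sin_arccos, hcos, sqrt_div' _ (by positivity),
    sqrt_sq (by positivity), ← mul_mul_rotate_fin3 x i]
  field_simp

lemma eq_of_genAngle_eq {y : Fin 3 → ℝ} (hx : IsTriangle x) (hy : IsTriangle y)
    (hprod : x 0 * x 1 * x 2 = y 0 * y 1 * y 2) (h : genAngle x = genAngle y) : x = y := by
  set c := √(heronProd x) / (2 * (x 0 * x 1 * x 2))
  set d := √(heronProd y) / (2 * (y 0 * y 1 * y 2))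
  have hside : ∀ i, c * x i = d * y i := fun i => by
    rw [← hx.sin_genAngle, ← hy.sin_genAngle, h]
  have hxpos : 0 < x 0 * x 1 * x 2 := mul_pos (mul_pos (hx.1 0) (hx.1 1)) (hx.1 2)
  have hypos : 0 < y 0 * y 1 * y 2 := mul_pos (mul_pos (hy.1 0) (hy.1 1)) (hy.1 2)
  have hc : 0 < c := div_pos (sqrt_pos.2 hx.heronProd_pos) (by positivity)
  have hd : 0 < d := div_pos (sqrt_pos.2 hy.heronProd_pos) (by positivity)
  have hcube : c ^ 3 = d ^ 3 := by
    apply mul_right_cancel₀ hxpos.ne'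
    calc c ^ 3 * (x 0 * x 1 * x 2) = (c * x 0) * (c * x 1) * (c * x 2) := by ring
      _ = (d * y 0) * (d * y 1) * (d * y 2) := by rw [hside 0, hside 1, hside 2]
      _ = d ^ 3 * (x 0 * x 1 * x 2) := by rw [hprod]; ring
  have hcd : c = d := (pow_left_inj₀ hc.le hd.le three_ne_zero).mp hcube
  funext i
  exact mul_left_cancel₀ hc.ne' ((hside i).trans (by rw [hcd]))

end IsTriangle

lemma isTriangle_exp_of_mem_domA {u : Fin 3 → ℝ} (hu : u ∈ domA) :
    IsTriangle (fun j => exp (u j)) :=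
  ⟨fun _ => exp_pos _, hu.2⟩

lemma eq_of_genAngle_exp_eq {u v : Fin 3 → ℝ} (hu : u ∈ domA) (hv : v ∈ domA)
    (h : genAngle (fun j => exp (u j)) = genAngle (fun j => exp (v j))) : u = v := by
  have hprod : ∀ w ∈ domA, exp (w 0) * exp (w 1) * exp (w 2) = 1 := fun w hw => by
    rw [← exp_add, ← exp_add, hw.1, exp_zero]
  have := (isTriangle_exp_of_mem_domA hu).eq_of_genAngle_eq (isTriangle_exp_of_mem_domA hv)
    ((hprod u hu).trans (hprod v hv).symm) h
  exact funext fun j => exp_injective (congrFun this j)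

/-- any `C¹` convex potential of the angle functions is strictly convex on `A`. -/
theorem strictly_convex_on_domA (F : (Fin 3 → ℝ) → ℝ)
    (hF : ContDiff ℝ 1 F) (hconv : ConvexOn ℝ Set.univ F)
    (hgrad : ∀ (u : Fin 3 → ℝ) (i : Fin 3),
      fderiv ℝ F u (Pi.single i 1) = genAngle (fun j => Real.exp (u j)) i) :
    ∀ u v : Fin 3 → ℝ, u ∈ domA → v ∈ domA → u ≠ v → segment ℝ u v ⊆ domA →
      F (fun j => (u j + v j) / 2) < (F u + F v) / 2 := by
  intro u v hu hv huv _
  by_contra hmid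
  have hmidpoint : (fun j => (u j + v j) / 2) = midpoint ℝ u v := by
    funext j
    rw [pi_midpoint_apply, midpoint_eq_smul_add]
    simp [div_eq_inv_mul]
  rw [hmidpoint, not_lt] at hmid
  have hderiv := hconv.fderiv_eq_of_le_midpoint (hF.differentiable one_ne_zero) hmid
  refine huv (eq_of_genAngle_exp_eq hu hv (funext fun i => ?_))
  rw [← hgrad, ← hgrad, hderiv]
end
end

section
/- Suppose (M,𝒯) is edge-transitive, so that all edges have the same valence d, and suppose d ≠ 6. Then there exists no zero-curvature generalized decorated metric (no l ∈ ℝ^E with K̃(l) = 0), and every solution l : [0,∞) → ℝ^E of the extended combinatorial Ricci flow diverges to infinity in subsequence: there exists t_n → ∞ with ‖l(t_n)‖ → ∞. -/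
noncomputable section

open Real Set Filter

/-- The three side lengths `e^{(l₁₂+l₃₄)/2}, e^{(l₁₃+l₂₄)/2}, e^{(l₁₄+l₂₃)/2}` of the
generalized Euclidean triangle associated to a length vector `l ∈ ℝ⁶`.
Edge indices: `0 ↔ {1,2}, 1 ↔ {1,3}, 2 ↔ {1,4}, 3 ↔ {2,3}, 4 ↔ {2,4}, 5 ↔ {3,4}`,
so opposite pairs of edges are `(0,5), (1,4), (2,3)`. -/
noncomputable def triSides (l : Fin 6 → ℝ) (k : Fin 3) : ℝ :=
  if k.val = 0 then Real.exp ((l 0 + l 5) / 2)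
  else if k.val = 1 then Real.exp ((l 1 + l 4) / 2)
  else Real.exp ((l 2 + l 3) / 2)

/-- The quad (pair of opposite edges) containing the edge `p`. -/
def quadIndex (p : Fin 6) : Fin 3 :=
  if p.val = 0 ∨ p.val = 5 then 0 else if p.val = 1 ∨ p.val = 4 then 1 else 2

/-- The extended dihedral angle `α_p(l)` of the generalized decorated tetrahedron with
length vector `l ∈ ℝ⁶` at the edge `p`. -/
noncomputable def dihedral (l : Fin 6 → ℝ) (p : Fin 6) : ℝ :=
  genAngle (triSides l) (quadIndex p)

/-- The edge index in `Fin 6` of the edge `{i,j}` of the tetrahedron on vertices `Fin 4`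
(junk value for `i = j`). -/
def edgeOf (i j : Fin 4) : Fin 6 :=
  if (i.val = 0 ∧ j.val = 1) ∨ (i.val = 1 ∧ j.val = 0) then 0
  else if (i.val = 0 ∧ j.val = 2) ∨ (i.val = 2 ∧ j.val = 0) then 1
  else if (i.val = 0 ∧ j.val = 3) ∨ (i.val = 3 ∧ j.val = 0) then 2
  else if (i.val = 1 ∧ j.val = 2) ∨ (i.val = 2 ∧ j.val = 1) then 3
  else if (i.val = 1 ∧ j.val = 3) ∨ (i.val = 3 ∧ j.val = 1) then 4
  else 5

/-- The two endpoints of the edge `p` of the tetrahedron. -/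
def endPts (p : Fin 6) : Fin 4 × Fin 4 :=
  if p.val = 0 then (0, 1) else if p.val = 1 then (0, 2) else if p.val = 2 then (0, 3)
  else if p.val = 3 then (1, 2) else if p.val = 4 then (1, 3) else (2, 3)

/-- The Lobachevsky function `Λ(x) = −∫₀ˣ ln|2 sin t| dt`. -/
noncomputable def lob (x : ℝ) : ℝ := -∫ t in (0:ℝ)..x, Real.log |2 * Real.sin t|

/-- The volume of the generalized decorated tetrahedron with length vector `l`. -/
noncomputable def vol6 (l : Fin 6 → ℝ) : ℝ := (1 / 2 : ℝ) * ∑ p : Fin 6, lob (dihedral l p)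

/-- The co-volume function `cov(l) = 2 vol(l) + Σ α_p(l) l_p` on `ℝ⁶`. -/
noncomputable def cov6 (l : Fin 6 → ℝ) : ℝ := 2 * vol6 l + ∑ p : Fin 6, dihedral l p * l p

/-- `𝓛 ⊂ ℝ⁶`: length vectors of genuine decorated ideal hyperbolic tetrahedra, i.e. those
whose associated generalized Euclidean triangle satisfies the strict triangle inequalities. -/
def Ldom : Set (Fin 6 → ℝ) :=
  {l | ∀ i : Fin 3, triSides l i < triSides l (i + 1) + triSides l (i + 2)}

/-- The action of `w ∈ ℝ⁴` on `l ∈ ℝ⁶`: `(w + l)_{ij} = l_{ij} + wᵢ + wⱼ`. -/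
def act (w : Fin 4 → ℝ) (l : Fin 6 → ℝ) : Fin 6 → ℝ :=
  fun p => l p + w (endPts p).1 + w (endPts p).2

/-- `ℝ̂⁴ = {w + 0 : w ∈ ℝ⁴} ⊂ ℝ⁶`. -/
def hatR4 : Set (Fin 6 → ℝ) := {x | ∃ w : Fin 4 → ℝ, x = act w 0}

/-- `i, j, k, h` are pairwise distinct, i.e. `{i,j,k,h} = {1,2,3,4}`. -/
def Distinct4 (i j k h : Fin 4) : Prop :=
  i ≠ j ∧ i ≠ k ∧ i ≠ h ∧ j ≠ k ∧ j ≠ h ∧ k ≠ h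

variable {T E : Type*}

/-- The length vector in `ℝ⁶` induced on the tetrahedron `σ` by a metric `l : E → ℝ`. -/
def pullback (glue : T → Fin 6 → E) (l : E → ℝ) (σ : T) : Fin 6 → ℝ :=
  fun p => l (glue σ p)

/-- The generalized Ricci curvature `K̃_e(l) = 2π − Σ_{σ} Σ_{p : glue σ p = e} α_p(l_σ)`. -/
noncomputable def Ric [Fintype T] [DecidableEq E] (glue : T → Fin 6 → E) (l : E → ℝ)
    (e : E) : ℝ :=
  2 * Real.pi -
    ∑ σ : T, ∑ p : Fin 6, if glue σ p = e then dihedral (pullback glue l σ) p else 0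

/-- `𝓛(M,𝒯)`: the set of decorated hyperbolic polyhedral metrics. -/
def LMdom (glue : T → Fin 6 → E) : Set (E → ℝ) := {l | ∀ σ : T, pullback glue l σ ∈ Ldom}

/-- `H̃(l) = Σ_σ cov(l_σ) − 2π Σ_e l_e`. -/
noncomputable def Htilde [Fintype T] [Fintype E] (glue : T → Fin 6 → E) (l : E → ℝ) : ℝ :=
  ∑ σ : T, cov6 (pullback glue l σ) - 2 * Real.pi * ∑ e : E, l e

/-- The valence `d_e` of an edge `e`: the number of pairs `(σ, p)` glued to `e`. -/
def valence [Fintype T] [DecidableEq E] (glue : T → Fin 6 → E) (e : E) : ℕ :=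
  ∑ σ : T, ∑ p : Fin 6, if glue σ p = e then 1 else 0

/-- `(M,𝒯)` is edge-transitive: any edge can be mapped to any other edge by an
automorphism of the triangulation. -/
def EdgeTransitive (glue : T → Fin 6 → E) : Prop :=
  ∀ e e' : E, ∃ (φ : T ≃ T) (ψ : E ≃ E) (ρ : T → Fin 4 ≃ Fin 4),
    (∀ (σ : T) (i j : Fin 4), i ≠ j →
      glue (φ σ) (edgeOf (ρ σ i) (ρ σ j)) = ψ (glue σ (edgeOf i j))) ∧ ψ e = e'

/-! ### Auxiliary lemmas -/

lemma aux_angle_eq_arccos (p q r : ℂ) (hpq : dist p q ≠ 0) (hrq : dist r q ≠ 0) :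
    EuclideanGeometry.angle p q r =
      Real.arccos ((dist p q ^ 2 + dist r q ^ 2 - dist p r ^ 2) / (2 * dist p q * dist r q)) := by
  have h := EuclideanGeometry.law_cos p q r
  have heq : (dist p q ^ 2 + dist r q ^ 2 - dist p r ^ 2) / (2 * dist p q * dist r q)
      = Real.cos (EuclideanGeometry.angle p q r) := by
    field_simp
    nlinarith [h]
  rw [heq, Real.arccos_cos (EuclideanGeometry.angle_nonneg _ _ _)
    (EuclideanGeometry.angle_le_pi _ _ _)]

lemma aux_arccos_triangle_sum {a b c : ℝ} (ha : 0 < a) (hb : 0 < b) (hc : 0 < c)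
    (h1 : a < b + c) (h2 : b < a + c) (h3 : c < a + b) :
    Real.arccos ((b ^ 2 + c ^ 2 - a ^ 2) / (2 * b * c))
      + Real.arccos ((c ^ 2 + a ^ 2 - b ^ 2) / (2 * c * a))
      + Real.arccos ((a ^ 2 + b ^ 2 - c ^ 2) / (2 * a * b)) = π := by
  set px : ℝ := (b ^ 2 + c ^ 2 - a ^ 2) / (2 * c) with hpx
  have hpos : 0 < b ^ 2 - px ^ 2 := by
    have f1 : 0 < a - b + c := by linarith
    have f2 : 0 < a + b - c := by linarith
    have f3 : 0 < b + c - a := by linarith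
    have f4 : 0 < b + c + a := by linarith
    have key : 0 < (a - b + c) * (a + b - c) * ((b + c - a) * (b + c + a)) :=
      mul_pos (mul_pos f1 f2) (mul_pos f3 f4)
    have h4 : 0 < (b * (2 * c)) ^ 2 - (b ^ 2 + c ^ 2 - a ^ 2) ^ 2 := by nlinarith [key]
    have heq : b ^ 2 - px ^ 2
        = ((b * (2 * c)) ^ 2 - (b ^ 2 + c ^ 2 - a ^ 2) ^ 2) / (2 * c) ^ 2 := by
      rw [hpx]; field_simp
    rw [heq]; positivity
  set py : ℝ := Real.sqrt (b ^ 2 - px ^ 2) with hpy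
  have hpy2 : py ^ 2 = b ^ 2 - px ^ 2 := Real.sq_sqrt hpos.le
  set P0 : ℂ := 0 with hP0
  set P1 : ℂ := (c : ℂ) with hP1
  set P2 : ℂ := ⟨px, py⟩ with hP2
  have hdre : ∀ z w : ℂ, dist z w = Real.sqrt ((z.re - w.re) ^ 2 + (z.im - w.im) ^ 2) := by
    intro z w
    rw [Complex.dist_eq, Complex.norm_def, Complex.normSq_apply]
    simp [pow_two]
  have d01 : dist P0 P1 = c := by
    rw [hdre]; simp [hP0, hP1]
    rw [Real.sqrt_sq_eq_abs, abs_of_pos hc]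
  have d02 : dist P0 P2 = b := by
    rw [hdre]; simp only [hP0, hP2, Complex.zero_re, Complex.zero_im]
    have heq : (0 - px) ^ 2 + (0 - py) ^ 2 = b ^ 2 := by linear_combination hpy2
    rw [heq, Real.sqrt_sq hb.le]
  have d12 : dist P1 P2 = a := by
    rw [hdre]; simp only [hP1, Complex.ofReal_re, Complex.ofReal_im, hP2]
    have hpxc : px * (2 * c) = b ^ 2 + c ^ 2 - a ^ 2 := by
      rw [hpx]; field_simp
    have heq : (c - px) ^ 2 + (0 - py) ^ 2 = a ^ 2 := by nlinarith [hpy2, hpxc]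
    rw [heq, Real.sqrt_sq ha.le]
  have h02 : P0 ≠ P2 := by intro h; rw [h] at d02; simp at d02; linarith
  have h12 : P1 ≠ P2 := by intro h; rw [h] at d12; simp at d12; linarith
  have A0 : EuclideanGeometry.angle P2 P0 P1
      = Real.arccos ((b ^ 2 + c ^ 2 - a ^ 2) / (2 * b * c)) := by
    rw [aux_angle_eq_arccos _ _ _ (by rw [dist_comm, d02]; positivity)
      (by rw [dist_comm, d01]; positivity), dist_comm P2 P0, dist_comm P1 P0, dist_comm P2 P1,
      d02, d01, d12]
  have A1 : EuclideanGeometry.angle P0 P1 P2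
      = Real.arccos ((c ^ 2 + a ^ 2 - b ^ 2) / (2 * c * a)) := by
    rw [aux_angle_eq_arccos _ _ _ (by rw [d01]; positivity)
      (by rw [dist_comm, d12]; positivity), dist_comm P2 P1, d01, d12, d02]
  have A2 : EuclideanGeometry.angle P1 P2 P0
      = Real.arccos ((a ^ 2 + b ^ 2 - c ^ 2) / (2 * a * b)) := by
    rw [aux_angle_eq_arccos _ _ _ (by rw [d12]; positivity)
      (by rw [d02]; positivity), dist_comm P1 P0, d12, d02, d01]
  have hsum := EuclideanGeometry.angle_add_angle_add_angle_eq_pi (p₁ := P2) P1 h02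
  rw [A0, A1, A2] at hsum
  linarith [hsum]

/-- A symmetric form of the generalized angle. -/
noncomputable def fAng (a b c : ℝ) : ℝ :=
  if b + c ≤ a then Real.pi
  else if a + c ≤ b ∨ a + b ≤ c then 0
  else Real.arccos ((b ^ 2 + c ^ 2 - a ^ 2) / (2 * b * c))

lemma aux_fAng_sum {a b c : ℝ} (ha : 0 < a) (hb : 0 < b) (hc : 0 < c) :
    fAng a b c + fAng b c a + fAng c a b = π := by
  unfold fAng
  by_cases H1 : b + c ≤ a
  · rw [if_pos H1, if_neg (by linarith), if_pos (Or.inr (by linarith : b + c ≤ a)),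
      if_neg (by linarith), if_pos (Or.inl (by linarith : c + b ≤ a))]
    ring
  · by_cases H2 : c + a ≤ b
    · rw [if_neg H1, if_pos (Or.inl (by linarith : a + c ≤ b)), if_pos H2,
        if_neg (by linarith), if_pos (Or.inr (by linarith : c + a ≤ b))]
      ring
    · by_cases H3 : a + b ≤ c
      · rw [if_neg H1, if_pos (Or.inr H3), if_neg H2,
          if_pos (Or.inl (by linarith : b + a ≤ c)), if_pos H3]
        ring
      · push_neg at H1 H2 H3
        rw [if_neg (by linarith), if_neg (by push_neg; constructor <;> linarith),
          if_neg (by linarith), if_neg (by push_neg; constructor <;> linarith),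
          if_neg (by linarith), if_neg (by push_neg; constructor <;> linarith)]
        exact aux_arccos_triangle_sum ha hb hc (by linarith) (by linarith) (by linarith)

lemma aux_genAngle_sum (x : Fin 3 → ℝ) (hx : ∀ i, 0 < x i) :
    genAngle x 0 + genAngle x 1 + genAngle x 2 = π := by
  have e0 : genAngle x 0 = fAng (x 0) (x 1) (x 2) := rfl
  have e1 : genAngle x 1 = fAng (x 1) (x 2) (x 0) := rfl
  have e2 : genAngle x 2 = fAng (x 2) (x 0) (x 1) := rfl
  rw [e0, e1, e2]
  exact aux_fAng_sum (hx 0) (hx 1) (hx 2)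

lemma aux_triSides_pos (l : Fin 6 → ℝ) (i : Fin 3) : 0 < triSides l i := by
  unfold triSides; split_ifs <;> exact Real.exp_pos _

lemma aux_sum_dihedral (l : Fin 6 → ℝ) : ∑ p : Fin 6, dihedral l p = 2 * π := by
  have h := aux_genAngle_sum (triSides l) (aux_triSides_pos l)
  rw [Fin.sum_univ_six]
  have q0 : dihedral l 0 = genAngle (triSides l) 0 := rfl
  have q1 : dihedral l 1 = genAngle (triSides l) 1 := rfl
  have q2 : dihedral l 2 = genAngle (triSides l) 2 := rfl
  have q3 : dihedral l 3 = genAngle (triSides l) 2 := rfl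
  have q4 : dihedral l 4 = genAngle (triSides l) 1 := rfl
  have q5 : dihedral l 5 = genAngle (triSides l) 0 := rfl
  rw [q0, q1, q2, q3, q4, q5]
  linarith

lemma aux_sum_Ric {T E : Type*} [Fintype T] [Fintype E] [DecidableEq E]
    (glue : T → Fin 6 → E) (l : E → ℝ) :
    ∑ e : E, Ric glue l e = 2 * π * (Fintype.card E) - 2 * π * (Fintype.card T) := by
  unfold Ric
  rw [Finset.sum_sub_distrib, Finset.sum_const, Finset.card_univ, nsmul_eq_mul]
  have hswap : ∑ e : E, ∑ σ : T, ∑ p : Fin 6,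
      (if glue σ p = e then dihedral (pullback glue l σ) p else 0)
      = ∑ σ : T, (2 * π) := by
    rw [Finset.sum_comm]
    refine Finset.sum_congr rfl fun σ _ => ?_
    rw [Finset.sum_comm]
    have h6 : ∀ p : Fin 6, ∑ e : E,
        (if glue σ p = e then dihedral (pullback glue l σ) p else 0)
        = dihedral (pullback glue l σ) p := by
      intro p
      simp [Finset.sum_ite_eq]
    rw [Finset.sum_congr rfl fun p _ => h6 p]
    exact aux_sum_dihedral _
  rw [hswap, Finset.sum_const, Finset.card_univ, nsmul_eq_mul]
  ring

lemma aux_sum_valence {T E : Type*} [Fintype T] [Fintype E] [DecidableEq E]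
    (glue : T → Fin 6 → E) :
    ∑ e : E, valence glue e = 6 * Fintype.card T := by
  unfold valence
  rw [Finset.sum_comm]
  have h6 : ∀ σ : T, ∑ e : E, ∑ p : Fin 6, (if glue σ p = e then 1 else 0) = 6 := by
    intro σ
    rw [Finset.sum_comm]
    simp [Finset.sum_ite_eq]
  rw [Finset.sum_congr rfl fun σ _ => h6 σ, Finset.sum_const, Finset.card_univ]
  ring

/-- if `(M,𝒯)` is edge-transitive with common edge valence `d ≠ 6`, then
there is no zero-curvature generalized decorated metric, and every solution of the
extended combinatorial Ricci flow diverges to infinity in subsequence. -/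
theorem edge_transitive_valence_ne_six_diverges
    [Fintype T] [Fintype E] [DecidableEq E] [Nonempty T]
    (glue : T → Fin 6 → E) (htr : EdgeTransitive glue)
    (d : ℕ) (hd : ∀ e : E, valence glue e = d) (hd6 : d ≠ 6) :
    (¬∃ l : E → ℝ, ∀ e : E, Ric glue l e = 0) ∧
    ∀ l : ℝ → E → ℝ, (∀ t : ℝ, 0 ≤ t → HasDerivAt l (Ric glue (l t)) t) →
      ∃ tn : ℕ → ℝ, Filter.Tendsto tn Filter.atTop Filter.atTop ∧
        Filter.Tendsto (fun n => ‖l (tn n)‖) Filter.atTop Filter.atTop := by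
  classical
  have hEne : Nonempty E := ⟨glue (Classical.arbitrary T) 0⟩
  have hcE : 0 < Fintype.card E := Fintype.card_pos
  have hval : Fintype.card E * d = 6 * Fintype.card T := by
    have h1 := aux_sum_valence glue
    have h2 : ∑ e : E, valence glue e = Fintype.card E * d := by
      rw [Finset.sum_congr rfl fun e _ => hd e, Finset.sum_const, Finset.card_univ,
        smul_eq_mul]
    omega
  have hne : Fintype.card E ≠ Fintype.card T := by
    intro h
    apply hd6
    have h3 : Fintype.card E * d = Fintype.card E * 6 := by omega
    exact Nat.eq_of_mul_eq_mul_left hcE h3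
  constructor
  · rintro ⟨l, h0⟩
    have h1 : ∑ e : E, Ric glue l e = 0 := Finset.sum_eq_zero fun e _ => h0 e
    rw [aux_sum_Ric] at h1
    have hpi := Real.pi_pos
    have hce : (Fintype.card E : ℝ) = (Fintype.card T : ℝ) := by nlinarith [h1]
    exact hne (Nat.cast_injective hce)
  · intro l hflow
    set c : ℝ := 2 * π * (Fintype.card E) - 2 * π * (Fintype.card T) with hcdef
    have hc : c ≠ 0 := by
      intro h
      apply hne
      have hpi := Real.pi_pos
      have hce : (Fintype.card E : ℝ) = (Fintype.card T : ℝ) := by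
        rw [hcdef] at h
        nlinarith [h]
      exact Nat.cast_injective hce
    set S : ℝ → ℝ := fun t => ∑ e : E, l t e with hSdef
    have hS : ∀ t : ℝ, 0 ≤ t → HasDerivAt S c t := by
      intro t ht
      have hcomp : ∀ e : E, HasDerivAt (fun s => l s e) (Ric glue (l t) e) t := by
        intro e
        exact (ContinuousLinearMap.proj (R := ℝ) (φ := fun _ : E => ℝ)
          e).hasFDerivAt.comp_hasDerivAt t (hflow t ht)
      have h4 := HasDerivAt.fun_sum (fun e (_ : e ∈ Finset.univ) => hcomp e)
      rwa [aux_sum_Ric glue (l t), ← hcdef] at h4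
    have key : ∀ t : ℝ, 0 ≤ t → S t = S 0 + c * t := by
      intro t ht
      have hcont : ContinuousOn (fun s => S s - c * s) (Icc 0 t) := by
        intro x hx
        exact (((hS x hx.1).sub ((hasDerivAt_id x).const_mul c)).continuousAt).continuousWithinAt
      have hderiv : ∀ x ∈ Ico (0:ℝ) t, HasDerivWithinAt (fun s => S s - c * s) 0 (Ici x) x := by
        intro x hx
        have h' := (hS x hx.1).fun_sub ((hasDerivAt_id x).const_mul c)
        simpa using h'.hasDerivWithinAt
      have h5 := constant_of_has_deriv_right_zero hcont hderiv t ⟨ht, le_refl t⟩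
      linarith [h5]
    have hE : (0:ℝ) < (Fintype.card E : ℝ) := by exact_mod_cast hcE
    have bound : ∀ t : ℝ, |S t| ≤ (Fintype.card E : ℝ) * ‖l t‖ := by
      intro t
      calc |S t| ≤ ∑ e : E, |l t e| := Finset.abs_sum_le_sum_abs _ _
        _ ≤ ∑ _e : E, ‖l t‖ := Finset.sum_le_sum fun e _ => by
            simpa [Real.norm_eq_abs] using norm_le_pi_norm (l t) e
        _ = (Fintype.card E : ℝ) * ‖l t‖ := by
            rw [Finset.sum_const, Finset.card_univ, nsmul_eq_mul]
    refine ⟨fun n => (n : ℝ), tendsto_natCast_atTop_atTop, ?_⟩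
    have hlow : Tendsto (fun n : ℕ => (|c| * (n : ℝ) - |S 0|) / (Fintype.card E : ℝ))
        atTop atTop := by
      apply Tendsto.atTop_div_const hE
      apply tendsto_atTop_add_const_right
      exact Tendsto.const_mul_atTop (abs_pos.2 hc) tendsto_natCast_atTop_atTop
    refine tendsto_atTop_mono (fun n => ?_) hlow
    have hn0 : (0:ℝ) ≤ (n : ℝ) := Nat.cast_nonneg n
    have hSn : S (n : ℝ) = S 0 + c * n := key _ hn0
    have h1 : |c| * (n : ℝ) - |S 0| ≤ |S (n : ℝ)| := by
      rw [hSn]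
      have h2 : |c * (n : ℝ)| = |c| * n := by rw [abs_mul, abs_of_nonneg hn0]
      have h4 := abs_add_le (c * (n:ℝ) + S 0) (-(S 0))
      simp only [add_neg_cancel_right, abs_neg] at h4
      have h5 : |S 0 + c * (n:ℝ)| = |c * (n:ℝ) + S 0| := by rw [add_comm]
      linarith
    rw [div_le_iff₀ hE]
    calc |c| * (n : ℝ) - |S 0| ≤ |S (n : ℝ)| := h1
      _ ≤ (Fintype.card E : ℝ) * ‖l (n : ℝ)‖ := bound _
      _ = ‖l (n : ℝ)‖ * (Fintype.card E : ℝ) := mul_comm _ _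
end
end
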